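/- For every integer p ≥ 1, every (pK₂ ∪ P₄)-free graph G satisfies χ(G) ≤ C(ω(G)+2p, 2p+1), where P₄ is the path on 4 vertices and C(a,b) denotes the binomial coefficient. -/

import Mathlib

open SimpleGraph

/-- `pK₂`: the disjoint union of `p` copies of the single-edge graph `K₂`. -/
def pK2 (p : ℕ) : SimpleGraph (Fin p × Fin 2) where
  Adj x y := x.1 = y.1 ∧ x.2 ≠ y.2
  symm := ⟨fun _ _ h => ⟨h.1.symm, h.2.symm⟩⟩
  loopless := ⟨fun _ h => h.2 rfl⟩

/-!
Induction on `p`; the case `p = 0` says that `P₄`-free graphs satisfy `χ ≤ ω`.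

For `P₄`-free graphs: if a maximum independent set `I` missed a maximum clique `Q`, the sets
`N(q) ∩ I` for `q ∈ Q` would form a chain (two incomparable ones give an induced `P₄`), and a vertex
of the smallest one would extend `Q`. So deleting `I` lowers `ω`, and `χ ≤ ω` follows by induction.

From `p` to `p + 1`: pick `x` in a maximum clique `K`. The neighbourhood of `x` has smaller clique
number and is handled by induction on `ω`. The non-neighbours `S` of `x` are peeled along the
vertices `c` of `K \ {x}`: those not adjacent to `c` see neither end of the edge `xc`, so they
contain no induced `pK₂ ∪ P₄`; those adjacent to `c` have one clique vertex fewer left to use.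
Pascal's rule sums the bounds to `C(ω + 2p + 1, 2p + 2)` colours for `S`, and then to
`C(ω + 2p + 2, 2p + 3)` colours for the whole graph.
-/

open Finset

namespace SimpleGraph

variable {V W X : Type*} {G : SimpleGraph V} {H : SimpleGraph W} {H' : SimpleGraph X}

def Embedding.sumElim (f : H ↪g G) (g : H' ↪g G) (hne : ∀ a b, f a ≠ g b)
    (hadj : ∀ a b, ¬G.Adj (f a) (g b)) : H ⊕g H' ↪g G where
  toFun := Sum.elim f g
  inj' := by
    rintro (a | a) (b | b) h
    · simpa using h
    · exact absurd h (hne a b)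
    · exact absurd h.symm (hne b a)
    · simpa using h
  map_rel_iff' {a b} := by
    change G.Adj (Sum.elim f g a) (Sum.elim f g b) ↔ _
    rcases a with a | a <;> rcases b with b | b
    · simp
    · simpa using hadj a b
    · simpa using fun h => hadj b a h.symm
    · simp

theorem isEmpty_embedding_induce (h : IsEmpty (H ↪g G)) (S : Set V) :
    IsEmpty (H ↪g G.induce S) :=
  ⟨fun f => h.false ((Embedding.induce S).comp f)⟩

theorem nonempty_pathGraph_four_embedding {a b c d : V} (hab : G.Adj a b) (hbc : G.Adj b c)
    (hcd : G.Adj c d) (hac : ¬G.Adj a c) (hbd : ¬G.Adj b d) (had : ¬G.Adj a d) :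
    Nonempty (pathGraph 4 ↪g G) := by
  have hac' : a ≠ c := by rintro rfl; exact had hcd
  have had' : a ≠ d := by rintro rfl; exact hac hcd.symm
  have hbd' : b ≠ d := by rintro rfl; exact had hab
  have hca : ¬G.Adj c a := fun h => hac h.symm
  have hdb : ¬G.Adj d b := fun h => hbd h.symm
  have hda : ¬G.Adj d a := fun h => had h.symm
  refine ⟨⟨⟨![a, b, c, d], ?_⟩, fun {i j} => ?_⟩⟩
  · intro i j h
    fin_cases i <;> fin_cases j <;>
      simp_all [hab.ne, hbc.ne, hcd.ne, hac'.symm, had'.symm, hbd'.symm]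
  · change G.Adj (![a, b, c, d] i) (![a, b, c, d] j) ↔ _
    fin_cases i <;> fin_cases j <;>
      simp [pathGraph_adj, hab, hbc, hcd, hab.symm, hbc.symm, hcd.symm, hac, hbd, had, hca, hdb, hda]

def Adj.pK2OneEmbedding {x y : V} (h : G.Adj x y) : pK2 1 ↪g G where
  toFun v := if v.2 = 0 then x else y
  inj' := by
    rintro ⟨i, s⟩ ⟨j, t⟩ hst
    fin_cases i; fin_cases j; fin_cases s <;> fin_cases t <;> simp_all [h.ne, h.ne.symm]
  map_rel_iff' {v w} := by
    change G.Adj (if v.2 = 0 then x else y) (if w.2 = 0 then x else y) ↔ _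
    obtain ⟨i, s⟩ := v
    obtain ⟨j, t⟩ := w
    fin_cases i; fin_cases j; fin_cases s <;> fin_cases t <;> simp [pK2, h, h.symm]

theorem Colorable.induce_union {A B : Set V} {a b : ℕ} (hA : (G.induce A).Colorable a)
    (hB : (G.induce B).Colorable b) : (G.induce (A ∪ B)).Colorable (a + b) := by
  classical
  obtain ⟨cA⟩ := hA
  obtain ⟨cB⟩ := hB
  let c : (G.induce (A ∪ B)).Coloring (Fin a ⊕ Fin b) := Coloring.mk
    (fun v => if h : v.1 ∈ A then .inl (cA ⟨v, h⟩) else .inr (cB ⟨v, v.2.resolve_left h⟩))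
    (by
      rintro ⟨u, hu⟩ ⟨v, hv⟩ huv
      by_cases huA : u ∈ A <;> by_cases hvA : v ∈ A <;> simp [huA, hvA]
      · exact cA.valid huv
      · exact cB.valid huv)
  simpa using c.colorable

theorem colorable_add_of_induce_compl (A : Set V) {a b : ℕ} (hA : (G.induce A).Colorable a)
    (hB : (G.induce Aᶜ).Colorable b) : G.Colorable (a + b) := by
  have hG := hA.induce_union hB
  rw [Set.union_compl_self] at hG
  exact (colorable_congr (induceUnivIso G)).1 hG

theorem IsClique.card_le_cliqueNum_induce [Finite V] {Q : Finset V} {S : Set V}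
    (hQ : G.IsClique (Q : Set V)) (hQS : (Q : Set V) ⊆ S) : #Q ≤ (G.induce S).cliqueNum := by
  classical
  have ht : (G.induce S).IsNClique #Q (Q.subtype (· ∈ S)) := by
    rw [isNClique_induce_iff, Finset.subtype_map_of_mem fun v hv => hQS hv]
    exact ⟨hQ, rfl⟩
  exact ht.card_eq ▸ IsClique.card_le_cliqueNum (tc := ht.isClique)

theorem exists_isNClique_cliqueNum_induce (S : Set V) :
    ∃ Q : Finset V, (Q : Set V) ⊆ S ∧ G.IsNClique (G.induce S).cliqueNum Q := by
  obtain ⟨t, ht⟩ := (G.induce S).exists_isNClique_cliqueNum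
  exact ⟨t.map (.subtype _), by simp, (isNClique_induce_iff ..).1 ht⟩

theorem cliqueNum_induce_mono [Finite V] {S T : Set V} (h : S ⊆ T) :
    (G.induce S).cliqueNum ≤ (G.induce T).cliqueNum := by
  obtain ⟨Q, hQS, hQ⟩ := G.exists_isNClique_cliqueNum_induce S
  exact hQ.card_eq ▸ hQ.isClique.card_le_cliqueNum_induce (hQS.trans h)

theorem cliqueNum_induce_add_one_le [Finite V] {c : V} {T : Set V} (hc : ∀ v ∈ T, G.Adj c v) :
    (G.induce T).cliqueNum + 1 ≤ (G.induce (insert c T)).cliqueNum := by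
  classical
  obtain ⟨Q, hQT, hQ⟩ := G.exists_isNClique_cliqueNum_induce T
  have hcQ := hQ.insert fun v hv => hc v (hQT hv)
  rw [← hcQ.card_eq]
  exact hcQ.isClique.card_le_cliqueNum_induce (by simpa using Set.insert_subset_insert hQT)

theorem one_le_cliqueNum [Finite V] [Nonempty V] : 1 ≤ G.cliqueNum := by
  classical
  obtain ⟨v⟩ := ‹Nonempty V›
  simpa using IsClique.card_le_cliqueNum (G := G) (t := {v}) (tc := by simp)

theorem colorable_one_of_cliqueNum_le_one [Finite V] (h : G.cliqueNum ≤ 1) : G.Colorable 1 := by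
  classical
  refine colorable_one_iff.2 (eq_bot_iff.2 fun u v huv => absurd h ?_)
  have := IsClique.card_le_cliqueNum (G := G) (t := {u, v})
    (tc := by simpa [isClique_pair] using fun _ => huv)
  rw [card_pair huv.ne] at this
  omega

theorem exists_adj_of_isMaximumIndepSet [Finite V] {I : Finset V} (hI : G.IsMaximumIndepSet I)
    {v : V} (hv : v ∉ I) : ∃ i ∈ I, G.Adj v i := by
  by_contra! h
  have hsub := (hI.isMaximalIndepSet I).2 (y := insert v (I : Set V))
    (hI.isIndepSet.insert fun i hi _ => ⟨h i hi, fun h' => h i hi h'.symm⟩) (Set.subset_insert _ _)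
  exact hv (hsub (Set.mem_insert v _))

theorem exists_mem_forall_adj_of_isEmpty_pathGraph_embedding
    (hG : IsEmpty (pathGraph 4 ↪g G)) {I Q : Finset V} (hI : G.IsIndepSet (I : Set V))
    (hIne : I.Nonempty) (hQ : G.IsClique (Q : Set V)) (hdom : ∀ q ∈ Q, ∃ i ∈ I, G.Adj q i) :
    ∃ i ∈ I, ∀ q ∈ Q, G.Adj q i := by
  classical
  rcases Q.eq_empty_or_nonempty with rfl | hQne
  · obtain ⟨i, hi⟩ := hIne
    exact ⟨i, hi, by simp⟩
  -- the traces `I ∩ N(q)` form a chain, so the smallest one lies in all of them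
  obtain ⟨q, hqQ, hq⟩ := Q.exists_min_image (fun q => #(I.filter (G.Adj q))) hQne
  obtain ⟨i, hiI, hqi⟩ := hdom q hqQ
  refine ⟨i, hiI, fun q' hq'Q => ?_⟩
  by_contra hq'i
  obtain ⟨i', hi', hqi'⟩ : ∃ i' ∈ I.filter (G.Adj q'), i' ∉ I.filter (G.Adj q) := by
    by_contra! h
    refine (card_lt_card ⟨h, fun h' => hq'i ?_⟩).not_ge (hq q' hq'Q)
    exact (mem_filter.1 (h' (mem_filter.2 ⟨hiI, hqi⟩))).2
  rw [mem_filter] at hi' hqi'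
  have hqq' : q ≠ q' := by rintro rfl; exact hq'i hqi
  have hii' : ¬G.Adj i i' := fun h => hI hiI hi'.1 h.ne h
  exact hG.false (nonempty_pathGraph_four_embedding hqi.symm (hQ hqQ hq'Q hqq') hi'.2
    (fun h => hq'i h.symm) (fun h => hqi' ⟨hi'.1, h⟩) hii').some

theorem colorable_cliqueNum_of_isEmpty_pathGraph_embedding [Fintype V]
    (hG : IsEmpty (pathGraph 4 ↪g G)) : G.Colorable G.cliqueNum := by
  induction hω : G.cliqueNum using Nat.strong_induction_on generalizing V with
  | _ n ih =>
  classical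
  rcases isEmpty_or_nonempty V with hV | hV
  · exact .of_isEmpty n
  obtain ⟨I, hI⟩ := G.maximumIndepSet_exists
  have hIne : I.Nonempty := by
    obtain ⟨v⟩ := hV
    exact card_pos.1 (lt_of_lt_of_le (by simp) (hI.maximum {v} (by simp)))
  have hlt : (G.induce (↑I)ᶜ).cliqueNum < n := by
    obtain ⟨Q, hQI, hQ⟩ := G.exists_isNClique_cliqueNum_induce (↑I)ᶜ
    obtain ⟨i, hiI, hiQ⟩ := exists_mem_forall_adj_of_isEmpty_pathGraph_embedding hG
      hI.isIndepSet hIne hQ.isClique fun q hq => exists_adj_of_isMaximumIndepSet hI (hQI hq)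
    have hiQ' := hQ.insert fun q hq => (hiQ q hq).symm
    rw [← hω, Nat.lt_iff_add_one_le, ← hiQ'.card_eq]
    exact IsClique.card_le_cliqueNum (tc := hiQ'.isClique)
  have hIcol : (G.induce I).Colorable 1 := colorable_one_iff.2 <| eq_bot_iff.2
    fun u v huv => hI.isIndepSet u.2 v.2 (Subtype.coe_ne_coe.2 huv.ne) huv
  exact (colorable_add_of_induce_compl _ hIcol
    (ih _ hlt (isEmpty_embedding_induce hG _) rfl)).mono (by omega)

end SimpleGraph

def pK2AddIso (m n : ℕ) : pK2 (m + n) ≃g pK2 m ⊕g pK2 n where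
  toEquiv := (finSumFinEquiv.symm.prodCongr (Equiv.refl _)).trans (Equiv.sumProdDistrib _ _ _)
  map_rel_iff' := by
    rintro ⟨i, s⟩ ⟨j, t⟩
    obtain ⟨i, rfl⟩ := finSumFinEquiv.surjective i
    obtain ⟨j, rfl⟩ := finSumFinEquiv.surjective j
    rcases i with i | i <;> rcases j with j | j <;> simp [pK2, Fin.ext_iff] <;> omega

theorem isEmpty_pathGraph_embedding_of_pK2_zero {V : Type*} {G : SimpleGraph V}
    (hG : IsEmpty ((pK2 0 ⊕g pathGraph 4) ↪g G)) : IsEmpty (pathGraph 4 ↪g G) :=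
  ⟨fun f => hG.false (Embedding.sumElim (RelEmbedding.ofIsEmpty _ _) f isEmptyElim isEmptyElim)⟩

theorem isEmpty_pK2_sum_embedding_induce_of_adj {V : Type*} {G : SimpleGraph V} {p : ℕ}
    (hG : IsEmpty ((pK2 (p + 1) ⊕g pathGraph 4) ↪g G)) {x y : V} (hxy : G.Adj x y) {S : Set V}
    (hS : ∀ v ∈ S, ¬G.Adj x v ∧ ¬G.Adj y v) :
    IsEmpty ((pK2 p ⊕g pathGraph 4) ↪g G.induce S) := by
  refine ⟨fun f => hG.false ?_⟩
  have hedge (b) : hxy.pK2OneEmbedding b = x ∨ hxy.pK2OneEmbedding b = y :=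
    ite_eq_or_eq _ _ _
  have hxS : x ∉ S := fun h => (hS x h).2 hxy.symm
  have hyS : y ∉ S := fun h => (hS y h).1 hxy
  let iso : pK2 (p + 1) ⊕g pathGraph 4 ≃g (pK2 p ⊕g pathGraph 4) ⊕g pK2 1 :=
    ((pK2AddIso p 1).sumCongr .refl).trans <| Iso.sumAssoc.trans <|
      (Iso.sumCongr .refl Iso.sumComm).trans Iso.sumAssoc.symm
  refine (Embedding.sumElim ((Embedding.induce S).comp f) hxy.pK2OneEmbedding
    (fun a b h => ?_) (fun a b h => ?_)).comp iso.toEmbedding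
  · rcases hedge b with hb | hb <;> rw [hb] at h
    exacts [hxS (h ▸ (f a).2), hyS (h ▸ (f a).2)]
  · rcases hedge b with hb | hb <;> rw [hb] at h
    exacts [(hS _ (f a).2).1 h.symm, (hS _ (f a).2).2 h.symm]

section Step

variable {p : ℕ} {V : Type} [Fintype V] {G : SimpleGraph V}

theorem colorable_induce_of_forall_not_adj
    (hcol : ∀ (W : Type) [Fintype W] (H : SimpleGraph W), IsEmpty ((pK2 p ⊕g pathGraph 4) ↪g H) →
      H.Colorable ((H.cliqueNum + 2 * p).choose (2 * p + 1)))
    (hG : IsEmpty ((pK2 (p + 1) ⊕g pathGraph 4) ↪g G))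
    {x : V} {C : Finset V} (hC : G.IsClique (C : Set V)) (hxC : ∀ c ∈ C, G.Adj x c) {S : Set V}
    (hxS : ∀ v ∈ S, ¬G.Adj x v) (hω : (G.induce (S ∪ C)).cliqueNum ≤ #C + 1) :
    (G.induce S).Colorable ((#C + 2 * p + 2).choose (2 * p + 2)) := by
  classical
  induction C using Finset.induction_on generalizing S with
  | empty =>
    rw [coe_empty, Set.union_empty] at hω
    simpa using colorable_one_of_cliqueNum_le_one hω
  | insert c C hcC ih =>
    rw [coe_insert] at hC hω
    rw [card_insert_of_notMem hcC] at hω ⊢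
    have hfar : (G.induce (S \ G.neighborSet c)).Colorable
        ((#C + 2 * p + 2).choose (2 * p + 1)) := by
      refine (hcol _ _ (isEmpty_pK2_sum_embedding_induce_of_adj hG (hxC c (mem_insert_self c C))
        fun v hv => ⟨hxS v hv.1, hv.2⟩)).mono (Nat.choose_le_choose _ ?_)
      have := cliqueNum_induce_mono (G := G)
        (Set.sdiff_subset.trans Set.subset_union_left : S \ G.neighborSet c ⊆ S ∪ insert c ↑C)
      omega
    have hcadj : ∀ v ∈ S ∩ G.neighborSet c ∪ C, G.Adj c v := by
      rintro v (hv | hv)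
      · exact hv.2
      · exact hC (Set.mem_insert _ _) (Set.mem_insert_of_mem _ hv) (by rintro rfl; exact hcC hv)
    have hnear : (G.induce (S ∩ G.neighborSet c)).Colorable
        ((#C + 2 * p + 2).choose (2 * p + 2)) := by
      refine ih (hC.subset (Set.subset_insert _ _)) (fun c' hc' => hxC c' (mem_insert_of_mem hc'))
        (fun v hv => hxS v hv.1) ?_
      have hsub : insert c (S ∩ G.neighborSet c ∪ C) ⊆ S ∪ insert c ↑C :=
        Set.insert_subset (.inr (Set.mem_insert _ _)) (Set.union_subset
          (Set.inter_subset_left.trans Set.subset_union_left)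
          ((Set.subset_insert _ _).trans Set.subset_union_right))
      have := (cliqueNum_induce_add_one_le hcadj).trans (cliqueNum_induce_mono hsub)
      omega
    rw [← Set.sdiff_union_inter S (G.neighborSet c),
      show #C + 1 + 2 * p + 2 = #C + 2 * p + 2 + 1 by ring, Nat.choose_succ_succ']
    exact hfar.induce_union hnear

theorem colorable_choose_succ_of_isEmpty_embedding
    (hcol : ∀ (W : Type) [Fintype W] (H : SimpleGraph W), IsEmpty ((pK2 p ⊕g pathGraph 4) ↪g H) →
      H.Colorable ((H.cliqueNum + 2 * p).choose (2 * p + 1)))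
    (hG : IsEmpty ((pK2 (p + 1) ⊕g pathGraph 4) ↪g G)) :
    G.Colorable ((G.cliqueNum + 2 * (p + 1)).choose (2 * (p + 1) + 1)) := by
  induction hω : G.cliqueNum using Nat.strong_induction_on generalizing V with
  | _ n ih =>
  classical
  rcases isEmpty_or_nonempty V with hV | hV
  · exact .of_isEmpty _
  obtain ⟨K, hK⟩ := G.exists_isNClique_cliqueNum
  obtain ⟨w, rfl⟩ : ∃ w, n = w + 1 := Nat.exists_eq_add_of_le' (hω ▸ one_le_cliqueNum)
  have hKcard := hK.card_eq
  obtain ⟨x, hxK⟩ : K.Nonempty := card_pos.1 (by omega)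
  have hKx : #(K.erase x) = w := by rw [card_erase_of_mem hxK]; omega
  have hN : (G.induce (G.neighborSet x)).cliqueNum < w + 1 :=
    hω ▸ (cliqueNum_induce_add_one_le fun _ h => h).trans (cliqueNum_induce_le _)
  have hNcol := ih _ hN (isEmpty_embedding_induce hG _) rfl
  have hNccol := colorable_induce_of_forall_not_adj hcol hG (S := (G.neighborSet x)ᶜ)
    (hK.isClique.subset (by simp))
    (fun c hc => hK.isClique hxK (mem_of_mem_erase hc) (ne_of_mem_erase hc).symm)
    (fun v hv => hv) (by rw [hKx, ← hω]; exact cliqueNum_induce_le _)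
  rw [hKx] at hNccol
  refine (colorable_add_of_induce_compl _ (hNcol.mono (Nat.choose_le_choose _
    (by omega : _ ≤ w + 2 * p + 2))) hNccol).mono (le_of_eq ?_)
  rw [show w + 1 + 2 * (p + 1) = w + 2 * p + 2 + 1 by ring,
    show 2 * (p + 1) + 1 = 2 * p + 2 + 1 by ring, Nat.choose_succ_succ' (w + 2 * p + 2), add_comm]

end Step

theorem colorable_choose_of_isEmpty_embedding (p : ℕ) (V : Type) [Fintype V] (G : SimpleGraph V)
    (hG : IsEmpty ((pK2 p ⊕g pathGraph 4) ↪g G)) :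
    G.Colorable ((G.cliqueNum + 2 * p).choose (2 * p + 1)) := by
  induction p generalizing V with
  | zero =>
    simpa using colorable_cliqueNum_of_isEmpty_pathGraph_embedding
      (isEmpty_pathGraph_embedding_of_pK2_zero hG)
  | succ p ih => exact colorable_choose_succ_of_isEmpty_embedding ih hG

theorem stmt_10_general (p : ℕ) (V : Type) [Fintype V] (G : SimpleGraph V)
    (hG : IsEmpty ((pK2 p ⊕g pathGraph 4) ↪g G)) :
    G.chromaticNumber ≤ (Nat.choose (G.cliqueNum + 2 * p) (2 * p + 1) : ℕ∞) :=
  (colorable_choose_of_isEmpty_embedding p V G hG).chromaticNumber_le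

theorem stmt_10 (p : ℕ) (hp : 1 ≤ p) (V : Type) [Fintype V] (G : SimpleGraph V)
    (hG : IsEmpty ((pK2 p ⊕g pathGraph 4) ↪g G)) :
    G.chromaticNumber ≤ (Nat.choose (G.cliqueNum + 2 * p) (2 * p + 1) : ℕ∞) :=
  stmt_10_general p V G hG
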